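/- Let γ: [0,∞) → (0,∞) be C^2 with γ(0) = γ'(0) = 1, γ increasing and γ'' < 0. Let t > 0 and h: [0,t] → ℝ continuous with |h(s)| ≤ -γ''(s)/γ(s). If y solves y'' = h·y on [0,t] with boundary conditions y(0) = y'(0) + 1 and y(t) = 0, then 0 ≤ y(s) ≤ (t-s)/γ(t) for all s ∈ [0,t]. -/

import Mathlib

/-!
The comparison function `γ̃ s = γ s * ∫ τ in s..t, (γ τ ^ 2)⁻¹` satisfies
`γ̃'' = γ'' * ∫ τ in s..t, (γ τ ^ 2)⁻¹ ≤ h * γ̃`, vanishes at `t`, is positive on `[0, t)` and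
satisfies the same Robin condition `γ̃ 0 - γ̃' 0 = 1` as `y`. A Sturm-type Wronskian argument then
gives `0 ≤ y` and `0 ≤ γ̃ - y`: on a maximal interval where the compared function `u` is negative,
the Wronskian `u' γ̃ - u γ̃'` is nonincreasing and nonnegative at the right end, so `u / γ̃` is
nondecreasing there, which is incompatible with the boundary behaviour at the left end. Finally
`γ̃'' ≤ 0`, so `γ̃` lies below its tangent line at `t`, which is `(t - s) / γ t`.
-/

open Set

lemma monotoneOn_Icc_of_hasDerivAt {f f' : ℝ → ℝ} {a b : ℝ}
    (hf : ∀ x ∈ Icc a b, HasDerivAt f (f' x) x) (hf' : ∀ x ∈ Ioo a b, 0 ≤ f' x) :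
    MonotoneOn f (Icc a b) :=
  monotoneOn_of_hasDerivWithinAt_nonneg (convex_Icc a b)
    (fun x hx => (hf x hx).continuousAt.continuousWithinAt)
    (by simpa only [interior_Icc] using
      fun x hx => (hf x (Ioo_subset_Icc_self hx)).hasDerivWithinAt)
    (by simpa only [interior_Icc] using hf')

lemma antitoneOn_Icc_of_hasDerivAt {f f' : ℝ → ℝ} {a b : ℝ}
    (hf : ∀ x ∈ Icc a b, HasDerivAt f (f' x) x) (hf' : ∀ x ∈ Ioo a b, f' x ≤ 0) :
    AntitoneOn f (Icc a b) :=
  antitoneOn_of_hasDerivWithinAt_nonpos (convex_Icc a b)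
    (fun x hx => (hf x hx).continuousAt.continuousWithinAt)
    (by simpa only [interior_Icc] using
      fun x hx => (hf x (Ioo_subset_Icc_self hx)).hasDerivWithinAt)
    (by simpa only [interior_Icc] using hf')

lemma HasDerivAt.nonneg_of_le_left {u : ℝ → ℝ} {u' b c : ℝ} (hu : HasDerivAt u u' b)
    (hcb : c < b) (hle : ∀ x ∈ Ioo c b, u x ≤ u b) : 0 ≤ u' := by
  refine ge_of_tendsto (hasDerivAt_iff_tendsto_slope_left_right.mp hu).1 ?_
  filter_upwards [Ioo_mem_nhdsLT hcb] with x hx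
  rw [slope_def_field]
  exact div_nonneg_of_nonpos (sub_nonpos.mpr (hle x hx)) (sub_nonpos.mpr hx.2.le)

lemma le_tangent_right_of_antitoneOn_deriv {f f' : ℝ → ℝ} {a b : ℝ}
    (hf : ∀ x ∈ Icc a b, HasDerivAt f (f' x) x) (hf' : AntitoneOn f' (Icc a b)) :
    ∀ x ∈ Icc a b, f x ≤ f b + f' b * (x - b) := by
  intro x hx
  have hab : a ≤ b := hx.1.trans hx.2
  have hmono : MonotoneOn (fun y => f y - f' b * y) (Icc a b) :=
    monotoneOn_Icc_of_hasDerivAt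
      (fun y hy => ((hf y hy).sub ((hasDerivAt_id y).const_mul (f' b))).congr_deriv (by simp))
      (fun y hy => sub_nonneg.mpr (hf' (Ioo_subset_Icc_self hy) ⟨hab, le_rfl⟩ hy.2.le))
  have := hmono hx ⟨hab, le_rfl⟩ hx.2
  simp only at this
  linarith

lemma exists_mem_Ioc_eq_zero_of_neg_of_nonneg {u : ℝ → ℝ} {c d : ℝ} (hcd : c ≤ d)
    (hu : ContinuousOn u (Icc c d)) (hc : u c < 0) (hd : 0 ≤ u d) :
    ∃ r ∈ Ioc c d, u r = 0 ∧ ∀ x ∈ Ico c r, u x < 0 := by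
  set S := Icc c d ∩ u ⁻¹' Ici 0
  have hS : IsClosed S := hu.preimage_isClosed_of_isClosed isClosed_Icc isClosed_Ici
  have hbdd : BddBelow S := ⟨c, fun x hx => hx.1.1⟩
  obtain ⟨⟨hcr, hrd⟩, hur⟩ : sInf S ∈ S := hS.csInf_mem ⟨d, ⟨hcd, le_rfl⟩, hd⟩ hbdd
  have hneg : ∀ x ∈ Ico c (sInf S), u x < 0 := fun x hx =>
    not_le.mp fun hux => hx.2.not_ge (csInf_le hbdd ⟨⟨hx.1, hx.2.le.trans hrd⟩, hux⟩)
  have hcr' : c < sInf S := lt_of_le_of_ne hcr fun h => (not_le.mpr hc) (h ▸ hur)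
  obtain ⟨x, hx, hux⟩ := intermediate_value_Icc hcr (hu.mono (Icc_subset_Icc le_rfl hrd))
    ⟨hc.le, hur⟩
  have hxr : x = sInf S := le_antisymm hx.2 (csInf_le hbdd ⟨⟨hx.1, hx.2.trans hrd⟩, hux.symm.le⟩)
  exact ⟨sInf S, ⟨hcr', hrd⟩, hxr ▸ hux, hneg⟩

lemma exists_mem_Ico_nonneg_of_nonneg_of_neg {u : ℝ → ℝ} {c d : ℝ} (hcd : c ≤ d)
    (hu : ContinuousOn u (Icc c d)) (hc : 0 ≤ u c) (hd : u d < 0) :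
    ∃ l ∈ Ico c d, 0 ≤ u l ∧ ∀ x ∈ Ioc l d, u x < 0 := by
  set S := Icc c d ∩ u ⁻¹' Ici 0
  have hS : IsClosed S := hu.preimage_isClosed_of_isClosed isClosed_Icc isClosed_Ici
  have hbdd : BddAbove S := ⟨d, fun x hx => hx.1.2⟩
  obtain ⟨⟨hcl, hld⟩, hul⟩ : sSup S ∈ S := hS.csSup_mem ⟨c, ⟨le_rfl, hcd⟩, hc⟩ hbdd
  refine ⟨sSup S, ⟨hcl, lt_of_le_of_ne hld ?_⟩, hul, fun x hx => not_le.mp fun hux => ?_⟩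
  · exact fun h => (not_le.mpr hd) (h ▸ hul)
  · exact hx.1.not_ge (le_csSup hbdd ⟨⟨hcl.trans hx.1.le, hx.2⟩, hux⟩)

section Wronskian

variable {g g' g'' u u' u'' : ℝ → ℝ}

lemma antitoneOn_wronskian {l r : ℝ}
    (hg : ∀ x ∈ Icc l r, HasDerivAt g (g' x) x) (hg' : ∀ x ∈ Icc l r, HasDerivAt g' (g'' x) x)
    (hu : ∀ x ∈ Icc l r, HasDerivAt u (u' x) x) (hu' : ∀ x ∈ Icc l r, HasDerivAt u' (u'' x) x)
    (hcomp : ∀ x ∈ Ioo l r, u'' x * g x - u x * g'' x ≤ 0) :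
    AntitoneOn (fun x => u' x * g x - u x * g' x) (Icc l r) :=
  antitoneOn_Icc_of_hasDerivAt
    (fun x hx => (((hu' x hx).mul (hg x hx)).sub ((hu x hx).mul (hg' x hx))).congr_deriv
      (by ring))
    hcomp

lemma monotoneOn_div_of_wronskian_nonneg {l r : ℝ}
    (hg : ∀ x ∈ Icc l r, HasDerivAt g (g' x) x) (hu : ∀ x ∈ Icc l r, HasDerivAt u (u' x) x)
    (hg_pos : ∀ x ∈ Icc l r, 0 < g x) (hW : ∀ x ∈ Ioo l r, 0 ≤ u' x * g x - u x * g' x) :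
    MonotoneOn (fun x => u x / g x) (Icc l r) :=
  monotoneOn_Icc_of_hasDerivAt (fun x hx => (hu x hx).div (hg x hx) (hg_pos x hx).ne')
    (fun x hx => div_nonneg (hW x hx) (sq_nonneg _))

lemma wronskian_nonneg_of_neg_of_eq_zero {a b l r : ℝ}
    (hg : ∀ s ∈ Icc a b, HasDerivAt g (g' s) s) (hg' : ∀ s ∈ Icc a b, HasDerivAt g' (g'' s) s)
    (hu : ∀ s ∈ Icc a b, HasDerivAt u (u' s) s) (hu' : ∀ s ∈ Icc a b, HasDerivAt u' (u'' s) s)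
    (hg_pos : ∀ s ∈ Ico a b, 0 < g s) (hgb : 0 ≤ g b)
    (hcomp : ∀ s ∈ Ioo a b, u s < 0 → u'' s * g s - u s * g'' s ≤ 0)
    (hal : a ≤ l) (hlr : l < r) (hrb : r ≤ b)
    (hneg : ∀ x ∈ Ioo l r, u x < 0) (hur : u r = 0) :
    ∀ x ∈ Icc l r, 0 ≤ u' x * g x - u x * g' x := by
  intro x hx
  have hsub : Icc l r ⊆ Icc a b := Icc_subset_Icc hal hrb
  have hanti := antitoneOn_wronskian (fun x hx => hg x (hsub hx)) (fun x hx => hg' x (hsub hx))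
    (fun x hx => hu x (hsub hx)) (fun x hx => hu' x (hsub hx))
    fun x hx => hcomp x ⟨hal.trans_lt hx.1, hx.2.trans_le hrb⟩ (hneg x hx)
  have hu'r : 0 ≤ u' r := (hu r (hsub ⟨hlr.le, le_rfl⟩)).nonneg_of_le_left hlr
    fun x hx => hur ▸ (hneg x hx).le
  have hgr : 0 ≤ g r := hrb.eq_or_lt.elim (fun h => h ▸ hgb)
    fun h => (hg_pos r ⟨hal.trans hlr.le, h⟩).le
  calc 0 ≤ u' r * g r - u r * g' r := by rw [hur, zero_mul, sub_zero]; positivity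
    _ ≤ u' x * g x - u x * g' x := hanti hx ⟨hlr.le, le_rfl⟩ hx.2

theorem nonneg_of_wronskian_comparison {a b : ℝ}
    (hg : ∀ s ∈ Icc a b, HasDerivAt g (g' s) s) (hg' : ∀ s ∈ Icc a b, HasDerivAt g' (g'' s) s)
    (hu : ∀ s ∈ Icc a b, HasDerivAt u (u' s) s) (hu' : ∀ s ∈ Icc a b, HasDerivAt u' (u'' s) s)
    (hg_pos : ∀ s ∈ Ico a b, 0 < g s) (hgb : 0 ≤ g b) (hga : g' a < g a)
    (hub : 0 ≤ u b) (hua : u' a ≤ u a)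
    (hcomp : ∀ s ∈ Ioo a b, u s < 0 → u'' s * g s - u s * g'' s ≤ 0) :
    ∀ s ∈ Icc a b, 0 ≤ u s := by
  intro s hs
  by_contra! hus
  have hsb : s < b := lt_of_le_of_ne hs.2 fun h => (not_le.mpr hus) (h ▸ hub)
  have hcont : ContinuousOn u (Icc a b) := fun x hx => (hu x hx).continuousAt.continuousWithinAt
  obtain ⟨r, ⟨hsr, hrb⟩, hur, hneg_r⟩ := exists_mem_Ioc_eq_zero_of_neg_of_nonneg hs.2
    (hcont.mono (Icc_subset_Icc hs.1 le_rfl)) hus hub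
  have hW_nonneg : ∀ l ∈ Icc a s, (∀ x ∈ Ioc l s, u x < 0) →
      ∀ x ∈ Icc l r, 0 ≤ u' x * g x - u x * g' x := fun l hl hneg_l =>
    wronskian_nonneg_of_neg_of_eq_zero hg hg' hu hu' hg_pos hgb hcomp hl.1
      (hl.2.trans_lt hsr) hrb
      (fun x hx => (le_or_gt x s).elim (fun h => hneg_l x ⟨hx.1, h⟩)
        fun h => hneg_r x ⟨h.le, hx.2⟩) hur
  by_cases hleft : ∃ x ∈ Icc a s, 0 ≤ u x
  · -- `u / g` is nondecreasing on `[l, s]`, yet `≥ 0` at `l` and `< 0` at `s`.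
    obtain ⟨x, hx, hux⟩ := hleft
    obtain ⟨l, ⟨hxl, hls⟩, hul, hneg_l⟩ := exists_mem_Ico_nonneg_of_nonneg_of_neg hx.2
      (hcont.mono (Icc_subset_Icc hx.1 hs.2)) hux hus
    have hsub : Icc l s ⊆ Ico a b := fun y hy => ⟨hx.1.trans (hxl.trans hy.1), hy.2.trans_lt hsb⟩
    have hmono := monotoneOn_div_of_wronskian_nonneg
      (fun y hy => hg y (Ico_subset_Icc_self (hsub hy)))
      (fun y hy => hu y (Ico_subset_Icc_self (hsub hy))) (fun y hy => hg_pos y (hsub hy))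
      fun y hy => hW_nonneg l ⟨hx.1.trans hxl, hls.le⟩ hneg_l y ⟨hy.1.le, hy.2.le.trans hsr.le⟩
    have hle : u l / g l ≤ u s / g s := hmono ⟨le_rfl, hls.le⟩ ⟨hls.le, le_rfl⟩ hls.le
    have hl_nonneg : 0 ≤ u l / g l := div_nonneg hul (hg_pos l (hsub ⟨le_rfl, hls.le⟩)).le
    have hs_neg : u s / g s < 0 := div_neg_of_neg_of_pos hus (hg_pos s (hsub ⟨hls.le, le_rfl⟩))
    linarith
  · -- Now `u < 0` on `[a, s]`, so the Wronskian is `≥ 0` at `a`; `hga` and `hua` make it `< 0`.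
    push Not at hleft
    have hWa := hW_nonneg a ⟨le_rfl, hs.1⟩ (fun x hx => hleft x ⟨hx.1.le, hx.2⟩) a
      ⟨le_rfl, hs.1.trans hsr.le⟩
    have hua_neg : u a < 0 := hleft a ⟨le_rfl, hs.1⟩
    have hga_pos : 0 < g a := hg_pos a ⟨le_rfl, hs.1.trans_lt hsb⟩
    nlinarith [mul_le_mul_of_nonneg_right hua hga_pos.le, mul_lt_mul_of_neg_left hga hua_neg]

end Wronskian

theorem mem_Icc_of_ode_of_supersolution {a b : ℝ} {g g' g'' y y' h : ℝ → ℝ}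
    (hg : ∀ s ∈ Icc a b, HasDerivAt g (g' s) s) (hg' : ∀ s ∈ Icc a b, HasDerivAt g' (g'' s) s)
    (hy : ∀ s ∈ Icc a b, HasDerivAt y (y' s) s)
    (hy' : ∀ s ∈ Icc a b, HasDerivAt y' (h s * y s) s)
    (hg_pos : ∀ s ∈ Ico a b, 0 < g s) (hgb : 0 ≤ g b) (hga : g' a < g a)
    (hyb : y b = 0) (hya : y a - y' a = g a - g' a)
    (hsuper : ∀ s ∈ Ioo a b, g'' s ≤ h s * g s) :
    ∀ s ∈ Icc a b, y s ∈ Icc 0 (g s) := by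
  have hy_nonneg : ∀ s ∈ Icc a b, 0 ≤ y s :=
    nonneg_of_wronskian_comparison hg hg' hy hy' hg_pos hgb hga hyb.ge (by linarith)
      fun s hs hys => by
        have : h s * y s * g s - y s * g'' s = y s * (h s * g s - g'' s) := by ring
        rw [this]
        exact mul_nonpos_of_nonpos_of_nonneg hys.le (sub_nonneg.mpr (hsuper s hs))
  have hgy : ∀ s ∈ Icc a b, 0 ≤ g s - y s :=
    nonneg_of_wronskian_comparison (u := fun s => g s - y s) hg hg'
      (fun s hs => (hg s hs).sub (hy s hs)) (fun s hs => (hg' s hs).sub (hy' s hs))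
      hg_pos hgb hga (by simpa [hyb] using hgb) (by linarith)
      fun s hs _ => by
        have : (g'' s - h s * y s) * g s - (g s - y s) * g'' s
            = y s * (g'' s - h s * g s) := by ring
        rw [this]
        exact mul_nonpos_of_nonneg_of_nonpos (hy_nonneg s (Ioo_subset_Icc_self hs))
          (sub_nonpos.mpr (hsuper s hs))
  exact fun s hs => ⟨hy_nonneg s hs, sub_nonneg.mp (hgy s hs)⟩

noncomputable def invSqIntegral (γ : ℝ → ℝ) (t s : ℝ) : ℝ := ∫ τ in s..t, (γ τ ^ 2)⁻¹

section invSqIntegral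

variable {γ γ' : ℝ → ℝ} {s t : ℝ}

lemma intervalIntegrable_inv_sq (hγ : Continuous γ) (hne : ∀ τ ∈ uIcc s t, γ τ ≠ 0) :
    IntervalIntegrable (fun τ => (γ τ ^ 2)⁻¹) MeasureTheory.volume s t :=
  ContinuousOn.intervalIntegrable fun τ hτ =>
    ((hγ.pow 2).continuousAt.inv₀ (pow_ne_zero 2 (hne τ hτ))).continuousWithinAt

lemma hasDerivAt_invSqIntegral (hγ : Continuous γ) (hne : ∀ τ ∈ uIcc s t, γ τ ≠ 0) :
    HasDerivAt (invSqIntegral γ t) (-(γ s ^ 2)⁻¹) s :=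
  intervalIntegral.integral_hasDerivAt_left (intervalIntegrable_inv_sq hγ hne)
    (hγ.pow 2).measurable.inv.stronglyMeasurable.stronglyMeasurableAtFilter
    ((hγ.pow 2).continuousAt.inv₀ (pow_ne_zero 2 (hne s left_mem_uIcc)))

lemma invSqIntegral_nonneg (hst : s ≤ t) : 0 ≤ invSqIntegral γ t s :=
  intervalIntegral.integral_nonneg hst fun _ _ => inv_nonneg.mpr (sq_nonneg _)

lemma invSqIntegral_pos (hγ : Continuous γ) (hne : ∀ τ ∈ uIcc s t, γ τ ≠ 0) (hst : s < t) :
    0 < invSqIntegral γ t s :=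
  intervalIntegral.intervalIntegral_pos_of_pos_on (intervalIntegrable_inv_sq hγ hne)
    (fun τ hτ => by
      have := hne τ (uIcc_of_le hst.le ▸ Ioo_subset_Icc_self hτ)
      positivity) hst

lemma hasDerivAt_mul_invSqIntegral (hγ : Continuous γ) (hγ₁ : HasDerivAt γ (γ' s) s)
    (hne : ∀ τ ∈ uIcc s t, γ τ ≠ 0) :
    HasDerivAt (fun x => γ x * invSqIntegral γ t x) (γ' s * invSqIntegral γ t s - (γ s)⁻¹) s :=
  (hγ₁.mul (hasDerivAt_invSqIntegral hγ hne)).congr_deriv (by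
    have := hne s left_mem_uIcc
    field_simp
    ring)

lemma hasDerivAt_deriv_mul_invSqIntegral {γ₂ : ℝ} (hγ : Continuous γ)
    (hγ₁ : HasDerivAt γ (γ' s) s) (hγ₂ : HasDerivAt γ' γ₂ s) (hne : ∀ τ ∈ uIcc s t, γ τ ≠ 0) :
    HasDerivAt (fun x => γ' x * invSqIntegral γ t x - (γ x)⁻¹) (γ₂ * invSqIntegral γ t s) s :=
  ((hγ₂.mul (hasDerivAt_invSqIntegral hγ hne)).sub (hγ₁.inv (hne s left_mem_uIcc))).congr_deriv
    (by ring)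

end invSqIntegral

theorem ode_boundary_value_comparison
    (γ : ℝ → ℝ) (hγC2 : ContDiff ℝ 2 γ)
    (hγpos : ∀ s : ℝ, 0 ≤ s → 0 < γ s)
    (hγ0 : γ 0 = 1) (hγ'0 : deriv γ 0 = 1)
    (hγ'' : ∀ s : ℝ, 0 ≤ s → deriv (deriv γ) s < 0)
    (t : ℝ)
    (h y y' : ℝ → ℝ)
    (hbound : ∀ s ∈ Set.Icc 0 t, |h s| ≤ -(deriv (deriv γ) s) / γ s)
    (hy : ∀ s ∈ Set.Icc 0 t, HasDerivAt y (y' s) s)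
    (hy' : ∀ s ∈ Set.Icc 0 t, HasDerivAt y' (h s * y s) s)
    (hinit : y 0 = y' 0 + 1) (hend : y t = 0) :
    ∀ s ∈ Set.Icc 0 t, 0 ≤ y s ∧ y s ≤ (t - s) / γ t := by
  intro s hs
  have hγ : Continuous γ := hγC2.continuous
  have hγ₁ : ∀ x, HasDerivAt γ (deriv γ x) x :=
    fun x => (hγC2.differentiable two_ne_zero x).hasDerivAt
  have hγ₂ : ∀ x, HasDerivAt (deriv γ) (deriv (deriv γ) x) x :=
    fun x => (hγC2.differentiable_deriv_two x).hasDerivAt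
  have hne : ∀ x ∈ Icc 0 t, ∀ τ ∈ uIcc x t, γ τ ≠ 0 := fun x hx τ hτ =>
    (hγpos τ (hx.1.trans (uIcc_of_le hx.2 ▸ hτ).1)).ne'
  have hg := fun x hx => hasDerivAt_mul_invSqIntegral hγ (hγ₁ x) (hne x hx)
  have hg' := fun x hx => hasDerivAt_deriv_mul_invSqIntegral hγ (hγ₁ x) (hγ₂ x) (hne x hx)
  have hIt : invSqIntegral γ t t = 0 := intervalIntegral.integral_same
  have hγ''_le : ∀ x ∈ Icc 0 t, deriv (deriv γ) x ≤ h x * γ x := fun x hx => by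
    have := neg_le_of_abs_le (hbound x hx)
    rwa [neg_div, neg_neg, div_le_iff₀ (hγpos x hx.1)] at this
  obtain ⟨hy_nonneg, hy_le⟩ := mem_Icc_of_ode_of_supersolution hg hg' hy hy'
    (fun x hx => mul_pos (hγpos x hx.1)
      (invSqIntegral_pos hγ (hne x (Ico_subset_Icc_self hx)) hx.2))
    (by simp [hIt]) (by simp [hγ0, hγ'0]) hend (by simp [hγ0, hγ'0, hinit])
    (fun x hx => by
      rw [← mul_assoc]
      exact mul_le_mul_of_nonneg_right (hγ''_le x (Ioo_subset_Icc_self hx))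
        (invSqIntegral_nonneg hx.2.le))
    s hs
  have htangent := le_tangent_right_of_antitoneOn_deriv hg
    (antitoneOn_Icc_of_hasDerivAt hg' fun x hx =>
      mul_nonpos_of_nonpos_of_nonneg (hγ'' x hx.1.le).le (invSqIntegral_nonneg hx.2.le)) s hs
  refine ⟨hy_nonneg, hy_le.trans (htangent.trans_eq ?_)⟩
  simp only [hIt]
  ring
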